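/- arXiv:1005.1989 — 3 statements merged into one kernel-verified Lean document; each statement's English description precedes it below -/
import Mathlib

section
/- Shoenfield Limit Lemma: For a set A ⊆ ℕ the following are equivalent. (i) A is Δ⁰₂, i.e., there exist computable predicates R, S : ℕ → ℕ → ℕ → Bool such that for every c, c ∈ A ↔ (∃ x, ∀ y, R x y c = true) and c ∉ A ↔ (∃ z, ∀ u, S z u c = true). (ii) There exists a computable witnessing predicate f : ℕ → ℕ → Bool such that for every c the sequence w ↦ f c w is eventually constant, and its eventual value is true if and only if c ∈ A. -/
/-!
At stage `s`, guess `c ∈ A` iff some candidate `x < s` for `∃ x, ∀ y, R x y c` has passed all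
tests `y < s` while every candidate `z ≤ x` for `∃ z, ∀ u, S z u c` has already failed a test.
Exactly one of the two Σ⁰₂ conditions has a genuine witness; once the finitely many candidates of
the other condition up to that witness have all failed, the guess is constant and correct.
Conversely, a limit approximation `f` yields the Σ⁰₂ conditions `∃ x, ∀ y, f c (x + y) = true`
and `∃ z, ∀ u, f c (z + u) = false`.
-/

open Filter

section BoundedQuantifiers

variable {α : Type*} [Primcodable α] {f : α → ℕ} {p : α → ℕ → Bool}

theorem Computable.decide_forall_lt (hf : Computable f) (hp : Computable₂ p) :
    Computable fun a => decide (∀ y < f a, p a y = true) := by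
  have hstep : Computable₂ fun a (q : ℕ × Bool) => q.2 && p a q.1 :=
    Primrec.and.to_comp.comp (Computable.snd.comp Computable.snd)
      (hp.comp Computable.fst (Computable.fst.comp Computable.snd))
  refine (Computable.nat_rec hf (Computable.const true) hstep).of_eq fun a => ?_
  induction f a with
  | zero => simp
  | succ n ih => simp only [ih, Nat.forall_lt_succ_right, Bool.decide_and, Bool.decide_eq_true]

theorem Computable.decide_exists_lt (hf : Computable f) (hp : Computable₂ p) :
    Computable fun a => decide (∃ y < f a, p a y = true) :=
  (Primrec.not.to_comp.comp (hf.decide_forall_lt (Primrec.not.to_comp.comp₂ hp))).of_eq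
    fun a => by rw [Bool.eq_iff_iff]; simp

end BoundedQuantifiers

section StageApproximation

variable {R S : ℕ → ℕ → Bool}

def stageApprox (R S : ℕ → ℕ → Bool) (s : ℕ) : Bool :=
  decide (∃ x < s, (∀ y < s, R x y = true) ∧ ∀ z ≤ x, ∃ u < s, S z u = false)

theorem eventually_forall_le_exists_lt_eq_false (hR : ∀ x, ∃ y, R x y = false) (b : ℕ) :
    ∀ᶠ s in atTop, ∀ x ≤ b, ∃ y < s, R x y = false := by
  refine (eventually_all_finite (Set.finite_Iic b)).2 fun x _ => ?_
  obtain ⟨y, hy⟩ := hR x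
  filter_upwards [eventually_gt_atTop y] with s hs using ⟨y, hs, hy⟩

theorem eventually_stageApprox_eq_true (hR : ∃ x, ∀ y, R x y = true)
    (hS : ∀ z, ∃ u, S z u = false) : ∀ᶠ s in atTop, stageApprox R S s = true := by
  obtain ⟨x, hx⟩ := hR
  filter_upwards [eventually_forall_le_exists_lt_eq_false hS x, eventually_gt_atTop x]
    with s hrefuted hxs
  exact decide_eq_true ⟨x, hxs, fun y _ => hx y, hrefuted⟩

theorem eventually_stageApprox_eq_false (hR : ∀ x, ∃ y, R x y = false)
    (hS : ∃ z, ∀ u, S z u = true) : ∀ᶠ s in atTop, stageApprox R S s = false := by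
  obtain ⟨z, hz⟩ := hS
  filter_upwards [eventually_forall_le_exists_lt_eq_false hR z] with s hrefuted
  refine decide_eq_false ?_
  rintro ⟨x, -, hxR, hxS⟩
  rcases le_total x z with hxz | hzx
  · obtain ⟨y, hy, hRy⟩ := hrefuted x hxz
    simp [hxR y hy] at hRy
  · obtain ⟨u, -, hSu⟩ := hxS z hzx
    simp [hz u] at hSu

theorem eventually_stageApprox_eq_decide {P : Prop} [Decidable P]
    (hR : P ↔ ∃ x, ∀ y, R x y = true) (hS : ¬P ↔ ∃ z, ∀ u, S z u = true) :
    ∀ᶠ s in atTop, stageApprox R S s = decide P := by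
  by_cases hP : P
  · simp only [hP, decide_true]
    refine eventually_stageApprox_eq_true (hR.1 hP) fun z => ?_
    by_contra! h
    exact hS.2 ⟨z, by simpa using h⟩ hP
  · simp only [hP, decide_false]
    refine eventually_stageApprox_eq_false (fun x => ?_) (hS.1 hP)
    by_contra! h
    exact hP (hR.2 ⟨x, by simpa using h⟩)

open Computable in
theorem computable₂_stageApprox {R S : ℕ → ℕ → ℕ → Bool}
    (hR : Computable fun p : ℕ × ℕ × ℕ => R p.1 p.2.1 p.2.2)
    (hS : Computable fun p : ℕ × ℕ × ℕ => S p.1 p.2.1 p.2.2) :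
    Computable₂ fun c s => stageApprox (fun x y => R x y c) (fun z u => S z u c) s := by
  have hpermute : Computable fun q : ((ℕ × ℕ) × ℕ) × ℕ => (q.1.2, q.2, q.1.1.1) :=
    (snd.comp fst).pair (snd.pair (fst.comp (fst.comp fst)))
  -- `(e :)` elaborates `e` before comparing it with the goal; unifying `hS.comp hpermute`
  -- against the goal directly sends the higher-order unifier into a timeout.
  have hrefuted : Computable₂ fun (p : ℕ × ℕ) z =>
      decide (∃ u < p.2, (!S z u p.1) = true) :=
    (snd.comp fst).decide_exists_lt (Primrec.not.to_comp.comp (hS.comp hpermute) :)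
  have hsurvives : Computable₂ fun (p : ℕ × ℕ) x => decide (∀ y < p.2, R x y p.1 = true) :=
    (snd.comp fst).decide_forall_lt (hR.comp hpermute :)
  have hallRefuted : Computable₂ fun (p : ℕ × ℕ) x =>
      decide (∀ z < x + 1, decide (∃ u < p.2, (!S z u p.1) = true) = true) :=
    (succ.comp snd).decide_forall_lt
      (hrefuted.comp (fst.comp fst) snd : Computable fun q : ((ℕ × ℕ) × ℕ) × ℕ => _)
  refine (snd.decide_exists_lt (Primrec.and.to_comp.comp₂ hsurvives hallRefuted)).of_eq
    fun p => ?_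
  simp [stageApprox]

end StageApproximation

theorem exists_forall_add_eq_iff {β : Type*} {g : ℕ → β} {m : ℕ} {ℓ : β}
    (h : ∀ n ≥ m, g n = ℓ) (b : β) : (∃ x, ∀ y, g (x + y) = b) ↔ ℓ = b := by
  constructor
  · rintro ⟨x, hx⟩
    rw [← h (x + m) (Nat.le_add_left m x), hx]
  · rintro rfl
    exact ⟨m, fun y => h _ (Nat.le_add_right m y)⟩

/-- Shoenfield Limit Lemma: `A` is Δ⁰₂ (given by computable predicates `R`, `S`
witnessing membership and non-membership in Σ⁰₂ form) iff there is a computable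
witnessing predicate `f` such that for every `c` the sequence `w ↦ f c w` is
eventually constant, with eventual value `true` iff `c ∈ A`. -/
theorem shoenfield_limit_lemma (A : Set ℕ) :
    (∃ R S : ℕ → ℕ → ℕ → Bool,
      Computable (fun p : ℕ × ℕ × ℕ => R p.1 p.2.1 p.2.2) ∧
      Computable (fun p : ℕ × ℕ × ℕ => S p.1 p.2.1 p.2.2) ∧
      ∀ c : ℕ, (c ∈ A ↔ ∃ x, ∀ y, R x y c = true) ∧
               (c ∉ A ↔ ∃ z, ∀ u, S z u c = true)) ↔
    (∃ f : ℕ → ℕ → Bool, Computable₂ f ∧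
      ∀ c : ℕ, ∃ m : ℕ, ∃ ℓ : Bool, (∀ n ≥ m, f c n = ℓ) ∧ (ℓ = true ↔ c ∈ A)) := by
  classical
  constructor
  · rintro ⟨R, S, hR, hS, hA⟩
    refine ⟨_, computable₂_stageApprox hR hS, fun c => ?_⟩
    obtain ⟨m, hm⟩ :=
      eventually_atTop.1 (eventually_stageApprox_eq_decide (hA c).1 (hA c).2)
    exact ⟨m, _, hm, decide_eq_true_iff⟩
  · rintro ⟨f, hf, hlim⟩
    have hshift : Computable fun p : ℕ × ℕ × ℕ => f p.2.2 (p.1 + p.2.1) :=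
      hf.comp (Computable.snd.comp Computable.snd)
        (Primrec.nat_add.to_comp.comp Computable.fst (Computable.fst.comp Computable.snd))
    refine ⟨fun x y c => f c (x + y), fun z u c => !f c (z + u), hshift,
      Primrec.not.to_comp.comp hshift, fun c => ?_⟩
    obtain ⟨m, ℓ, hm, hℓ⟩ := hlim c
    simp only [Bool.not_eq_true', exists_forall_add_eq_iff hm]
    cases ℓ <;> simp_all
end

section
/- Reduction property for Σ⁰₂ via limit-computable separation (semantic content of Theorem 2.4): Let A, B : ℕ → ℕ → ℕ → Bool be computable predicates, and assume that for every c the disjunction (∃ x, ∀ y, A x y c = false) ∨ (∃ z, ∀ u, B z u c = true) holds. Then there exists a computable predicate f : ℕ → ℕ → Bool such that for every c the sequence w ↦ f c w is eventually constant, and: if its eventual value is false then ∃ z, ∀ u, B z u c = true, while if its eventual value is true then ∃ x, ∀ y, A x y c = false. -/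
open Computable

/-- Bounded "for all `k < n`" as a boolean, defined by primitive recursion. -/
def bAll (p : ℕ → Bool) (n : ℕ) : Bool :=
  Nat.rec true (fun y IH => IH && p y) n

/-- Bounded "exists `k < n`" as a boolean, defined by primitive recursion. -/
def bEx (p : ℕ → Bool) (n : ℕ) : Bool :=
  Nat.rec false (fun y IH => IH || p y) n

theorem bAll_eq_true {p : ℕ → Bool} {n : ℕ} :
    bAll p n = true ↔ ∀ k < n, p k = true := by
  induction n with
  | zero => simp [bAll]
  | succ n ih =>
    show (bAll p n && p n) = true ↔ _
    rw [Bool.and_eq_true, ih]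
    constructor
    · rintro ⟨h1, h2⟩ k hk
      rcases Nat.lt_succ_iff_lt_or_eq.mp hk with h | rfl
      · exact h1 k h
      · exact h2
    · intro h
      exact ⟨fun k hk => h k (Nat.lt_succ_of_lt hk), h n (Nat.lt_succ_self n)⟩

theorem bEx_eq_true {p : ℕ → Bool} {n : ℕ} :
    bEx p n = true ↔ ∃ k, k < n ∧ p k = true := by
  induction n with
  | zero => simp [bEx]
  | succ n ih =>
    show (bEx p n || p n) = true ↔ _
    rw [Bool.or_eq_true, ih]
    constructor
    · rintro (⟨k, hk, hp⟩ | h)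
      · exact ⟨k, Nat.lt_succ_of_lt hk, hp⟩
      · exact ⟨n, Nat.lt_succ_self n, h⟩
    · rintro ⟨k, hk, hp⟩
      rcases Nat.lt_succ_iff_lt_or_eq.mp hk with h | rfl
      · exact Or.inl ⟨k, h, hp⟩
      · exact Or.inr hp

theorem computable_band {α : Type} [Primcodable α] {f g : α → Bool}
    (hf : Computable f) (hg : Computable g) : Computable fun a => f a && g a :=
  (Computable.cond hf hg (Computable.const false)).of_eq fun a => by cases f a <;> simp

theorem computable_bor {α : Type} [Primcodable α] {f g : α → Bool}
    (hf : Computable f) (hg : Computable g) : Computable fun a => f a || g a :=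
  (Computable.cond hf (Computable.const true) hg).of_eq fun a => by cases f a <;> simp

theorem computable_bnot {α : Type} [Primcodable α] {f : α → Bool}
    (hf : Computable f) : Computable fun a => !(f a) :=
  (Computable.cond hf (Computable.const false) (Computable.const true)).of_eq
    fun a => by cases f a <;> simp

theorem computable_bAll {α : Type} [Primcodable α] {p : α → ℕ → Bool} {g : α → ℕ}
    (hp : Computable₂ p) (hg : Computable g) :
    Computable fun a => bAll (p a) (g a) := by
  have hh : Computable₂ fun (a : α) (q : ℕ × Bool) => q.2 && p a q.1 :=
    (computable_band (Computable.snd.comp Computable.snd)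
      (hp.comp Computable.fst (Computable.fst.comp Computable.snd))).to₂
  exact Computable.nat_rec hg (Computable.const true) hh

theorem computable_bEx {α : Type} [Primcodable α] {p : α → ℕ → Bool} {g : α → ℕ}
    (hp : Computable₂ p) (hg : Computable g) :
    Computable fun a => bEx (p a) (g a) := by
  have hh : Computable₂ fun (a : α) (q : ℕ × Bool) => q.2 || p a q.1 :=
    (computable_bor (Computable.snd.comp Computable.snd)
      (hp.comp Computable.fst (Computable.fst.comp Computable.snd))).to₂
  exact Computable.nat_rec hg (Computable.const false) hh

/-- Reduction property for Σ⁰₂ via limit-computable separation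
(semantic content of Theorem 2.4). -/
theorem sigma2_reduction_limit_computable
    (A B : ℕ → ℕ → ℕ → Bool)
    (hA : Computable (fun p : ℕ × ℕ × ℕ => A p.1 p.2.1 p.2.2))
    (hB : Computable (fun p : ℕ × ℕ × ℕ => B p.1 p.2.1 p.2.2))
    (hdisj : ∀ c : ℕ, (∃ x, ∀ y, A x y c = false) ∨ (∃ z, ∀ u, B z u c = true)) :
    ∃ f : ℕ → ℕ → Bool, Computable₂ f ∧
      ∀ c : ℕ, ∃ m : ℕ, ∃ ℓ : Bool, (∀ n ≥ m, f c n = ℓ) ∧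
        (ℓ = false → ∃ z, ∀ u, B z u c = true) ∧
        (ℓ = true → ∃ x, ∀ y, A x y c = false) := by
  classical
  -- `NB c w z = true` means: `z` is ruled out as a B-witness by stage `w`.
  set NB : ℕ → ℕ → ℕ → Bool := fun c w z => !bAll (fun u => B z u c) (w + 1) with hNBdef
  set f : ℕ → ℕ → Bool := fun c w =>
    bEx (fun x => bAll (fun y => !A x y c) (w + 1) && bAll (fun z => NB c w z) x) (w + 1) ||
      bAll (fun z => NB c w z) (w + 1) with hfdef
  refine ⟨f, ?_, ?_⟩
  · -- Computability
    -- variables: `a : ℕ × ℕ` stands for `(c, w)`.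
    have hNB : Computable fun q : (ℕ × ℕ) × ℕ => NB q.1.1 q.1.2 q.2 := by
      have hBin : Computable₂ fun (q : (ℕ × ℕ) × ℕ) (u : ℕ) => B q.2 u q.1.1 := by
        have : Computable fun r : ((ℕ × ℕ) × ℕ) × ℕ => (r.1.2, r.2, r.1.1.1) :=
          Computable.pair (Computable.snd.comp Computable.fst)
            (Computable.pair Computable.snd
              (Computable.fst.comp (Computable.fst.comp Computable.fst)))
        exact (hB.comp this).to₂
      exact computable_bnot
        (computable_bAll hBin (Computable.succ.comp (Computable.snd.comp Computable.fst)))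
    have hAc : Computable fun q : (ℕ × ℕ) × ℕ =>
        bAll (fun y => !A q.2 y q.1.1) (q.1.2 + 1) := by
      have hAin : Computable₂ fun (q : (ℕ × ℕ) × ℕ) (y : ℕ) => !A q.2 y q.1.1 := by
        have htup : Computable fun r : ((ℕ × ℕ) × ℕ) × ℕ => (r.1.2, r.2, r.1.1.1) :=
          Computable.pair (Computable.snd.comp Computable.fst)
            (Computable.pair Computable.snd
              (Computable.fst.comp (Computable.fst.comp Computable.fst)))
        exact (computable_bnot (hA.comp htup)).to₂
      exact computable_bAll hAin (Computable.succ.comp (Computable.snd.comp Computable.fst))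
    have hNBx : Computable fun q : (ℕ × ℕ) × ℕ => bAll (fun z => NB q.1.1 q.1.2 z) q.2 := by
      have : Computable₂ fun (q : (ℕ × ℕ) × ℕ) (z : ℕ) => NB q.1.1 q.1.2 z :=
        (hNB.comp (Computable.pair (Computable.fst.comp Computable.fst)
          Computable.snd)).to₂
      exact computable_bAll this Computable.snd
    have hInner : Computable₂ fun (a : ℕ × ℕ) (x : ℕ) =>
        bAll (fun y => !A x y a.1) (a.2 + 1) && bAll (fun z => NB a.1 a.2 z) x :=
      (computable_band hAc hNBx).to₂
    have hExPart : Computable fun a : ℕ × ℕ =>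
        bEx (fun x => bAll (fun y => !A x y a.1) (a.2 + 1) && bAll (fun z => NB a.1 a.2 z) x)
          (a.2 + 1) :=
      computable_bEx hInner (Computable.succ.comp Computable.snd)
    have hAllPart : Computable fun a : ℕ × ℕ => bAll (fun z => NB a.1 a.2 z) (a.2 + 1) :=
      computable_bAll hNB.to₂ (Computable.succ.comp Computable.snd)
    exact (computable_bor hExPart hAllPart).to₂
  · -- Limit behaviour
    intro c
    -- helper facts about NB
    have hNB_true : ∀ w z u, u ≤ w → B z u c = false → NB c w z = true := by
      intro w z u hu hBu
      simp only [hNBdef, Bool.not_eq_true']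
      rw [Bool.eq_false_iff]
      intro hall
      have := bAll_eq_true.mp hall u (Nat.lt_succ_of_le hu)
      rw [hBu] at this; exact Bool.false_ne_true this
    have hNB_false : ∀ w z, (∀ u, B z u c = true) → NB c w z = false := by
      intro w z hz
      simp only [hNBdef, Bool.not_eq_false']
      exact bAll_eq_true.mpr fun u _ => hz u
    by_cases hQ : ∃ z, ∀ u, B z u c = true
    · -- there is a B-witness; let z₀ be the least one
      have hQ' : ∃ z, ∀ u, B z u c = true := hQ
      set z₀ := Nat.find hQ' with hz₀def
      have hz₀ : ∀ u, B z₀ u c = true := Nat.find_spec hQ'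
      by_cases hPle : ∃ x, x ≤ z₀ ∧ ∀ y, A x y c = false
      · -- some A-witness below z₀ : limit is `true`
        have hP : ∃ x, ∀ y, A x y c = false := ⟨hPle.choose, hPle.choose_spec.2⟩
        set x₁ := Nat.find hP with hx₁def
        have hx₁ : ∀ y, A x₁ y c = false := Nat.find_spec hP
        -- every z < x₁ is not a B-witness, so is eventually ruled out
        have hz_lt : ∀ z < x₁, ∃ u, B z u c = false := by
          intro z hz
          have hzlt : z < z₀ := lt_of_lt_of_le hz (le_trans (Nat.find_min' hP hPle.choose_spec.2) hPle.choose_spec.1)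
          have := Nat.find_min hQ' hzlt
          push_neg at this
          obtain ⟨u, hu⟩ := this
          exact ⟨u, Bool.not_eq_true _ ▸ (by simpa using hu)⟩
        obtain ⟨U, hU⟩ : ∃ U : ℕ → ℕ, ∀ z < x₁, B z (U z) c = false := by
          refine ⟨fun z => if h : ∃ u, B z u c = false then h.choose else 0, fun z hz => ?_⟩
          have h := hz_lt z hz
          simp only [dif_pos h]
          exact h.choose_spec
        set N := (Finset.range x₁).sup U with hNdef
        refine ⟨max x₁ N, true, ?_, ?_, ?_⟩
        · intro w hw
          have hwx : x₁ ≤ w := le_trans (le_max_left _ _) hw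
          have hwN : N ≤ w := le_trans (le_max_right _ _) hw
          have hbex : bEx (fun x => bAll (fun y => !A x y c) (w + 1) &&
              bAll (fun z => NB c w z) x) (w + 1) = true := by
            refine bEx_eq_true.mpr ⟨x₁, Nat.lt_succ_of_le hwx, ?_⟩
            rw [Bool.and_eq_true]
            constructor
            · exact bAll_eq_true.mpr fun y _ => by simp [hx₁ y]
            · refine bAll_eq_true.mpr fun z hz => ?_
              refine hNB_true w z (U z) ?_ (hU z hz)
              exact le_trans (Finset.le_sup (Finset.mem_range.mpr hz)) hwN
          simp [hfdef, hbex]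
        · intro h; exact absurd h (by simp)
        · intro _; exact hP
      · -- no A-witness ≤ z₀ : limit is `false`
        push_neg at hPle
        -- every x ≤ z₀ is not an A-witness
        have hx_le : ∀ x ≤ z₀, ∃ y, A x y c = true := by
          intro x hx
          have := hPle x hx
          obtain ⟨y, hy⟩ := this
          exact ⟨y, by simpa using hy⟩
        obtain ⟨Y, hY⟩ : ∃ Y : ℕ → ℕ, ∀ x ≤ z₀, A x (Y x) c = true := by
          refine ⟨fun x => if h : ∃ y, A x y c = true then h.choose else 0, fun x hx => ?_⟩
          have h := hx_le x hx
          simp only [dif_pos h]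
          exact h.choose_spec
        set N := (Finset.range (z₀ + 1)).sup Y with hNdef
        refine ⟨max z₀ N, false, ?_, ?_, ?_⟩
        · intro w hw
          have hwz : z₀ ≤ w := le_trans (le_max_left _ _) hw
          have hwN : N ≤ w := le_trans (le_max_right _ _) hw
          have hNBz₀ : NB c w z₀ = false := hNB_false w z₀ hz₀
          have hball : bAll (fun z => NB c w z) (w + 1) = false := by
            rw [Bool.eq_false_iff]
            intro h
            have := bAll_eq_true.mp h z₀ (Nat.lt_succ_of_le hwz)
            rw [hNBz₀] at this; exact Bool.false_ne_true this
          have hbex : bEx (fun x => bAll (fun y => !A x y c) (w + 1) &&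
              bAll (fun z => NB c w z) x) (w + 1) = false := by
            rw [Bool.eq_false_iff]
            intro h
            obtain ⟨x, _, hx⟩ := bEx_eq_true.mp h
            rw [Bool.and_eq_true] at hx
            obtain ⟨hx1, hx2⟩ := hx
            by_cases hxz : x ≤ z₀
            · -- but x ≤ z₀ is refuted by stage w
              have hy : A x (Y x) c = true := hY x hxz
              have hYle : Y x ≤ w :=
                le_trans (le_trans (Finset.le_sup (Finset.mem_range.mpr (Nat.lt_succ_of_le hxz))) (le_refl N)) hwN
              have := bAll_eq_true.mp hx1 (Y x) (Nat.lt_succ_of_le hYle)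
              rw [Bool.not_eq_true'] at this
              rw [hy] at this; exact absurd this (by simp)
            · -- x > z₀, but NB c w z₀ = false contradicts hx2
              have := bAll_eq_true.mp hx2 z₀ (Nat.lt_of_not_le hxz)
              rw [hNBz₀] at this; exact Bool.false_ne_true this
          simp [hfdef, hbex, hball]
        · intro _; exact hQ'
        · intro h; exact absurd h (by simp)
    · -- no B-witness at all : limit is `true`
      have hP : ∃ x, ∀ y, A x y c = false := (hdisj c).resolve_right hQ
      set x₁ := Nat.find hP with hx₁def
      have hx₁ : ∀ y, A x₁ y c = false := Nat.find_spec hP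
      have hz_lt : ∀ z, ∃ u, B z u c = false := by
        intro z
        by_contra h
        push_neg at h
        exact hQ ⟨z, fun u => by simpa using h u⟩
      obtain ⟨U, hU⟩ : ∃ U : ℕ → ℕ, ∀ z, B z (U z) c = false :=
        ⟨fun z => (hz_lt z).choose, fun z => (hz_lt z).choose_spec⟩
      set N := (Finset.range x₁).sup U with hNdef
      refine ⟨max x₁ N, true, ?_, ?_, ?_⟩
      · intro w hw
        have hwx : x₁ ≤ w := le_trans (le_max_left _ _) hw
        have hwN : N ≤ w := le_trans (le_max_right _ _) hw
        have hbex : bEx (fun x => bAll (fun y => !A x y c) (w + 1) &&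
            bAll (fun z => NB c w z) x) (w + 1) = true := by
          refine bEx_eq_true.mpr ⟨x₁, Nat.lt_succ_of_le hwx, ?_⟩
          rw [Bool.and_eq_true]
          constructor
          · exact bAll_eq_true.mpr fun y _ => by simp [hx₁ y]
          · refine bAll_eq_true.mpr fun z hz => ?_
            refine hNB_true w z (U z) ?_ (hU z)
            exact le_trans (Finset.le_sup (Finset.mem_range.mpr hz)) hwN
        simp [hfdef, hbex]
      · intro h; exact absurd h (by simp)
      · intro _; exact hP
end

section
/- Reduction with at most 3 mind changes from a Herbrand disjunction (semantic content of Lemma 3.2, case r = 1): Let A, B : ℕ → ℕ → ℕ → Bool be computable predicates, and let t₀, s₀ : ℕ → ℕ and t₁, s₁ : ℕ → ℕ → ℕ → ℕ be computable functions such that for all c, a₀, b₀, a₁, b₁: A (t₀ c) a₀ c = false ∨ B (s₀ c) b₀ c = true ∨ A (t₁ a₀ b₀ c) a₁ c = false ∨ B (s₁ a₀ b₀ c) b₁ c = true. Then there exists a computable predicate f : ℕ → ℕ → Bool such that for every c the set {w : f c w ≠ f c (w+1)} has at most 3 elements (so f c is eventually constant), and: if the eventual value of f c is false then ∃ z, ∀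 u, B z u c = true, while if it is true then ∃ x, ∀ y, A x y c = false. -/
namespace MCAux

/-- Bounded search: least `a ≤ w` with `p a = true`, found incrementally. -/
def bfind (p : ℕ → Bool) : ℕ → Option ℕ
  | 0 => cond (p 0) (some 0) none
  | (w+1) =>
    match bfind p w with
    | some a => some a
    | none => cond (p (w+1)) (some (w+1)) none

theorem bfind_mono {p : ℕ → Bool} {w a : ℕ} (h : bfind p w = some a) :
    bfind p (w+1) = some a := by
  simp [bfind, h]

theorem bfind_mono_le {p : ℕ → Bool} {w w' a : ℕ} (hw : w ≤ w')
    (h : bfind p w = some a) : bfind p w' = some a := by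
  induction w', hw using Nat.le_induction with
  | base => exact h
  | succ n hn ih => exact bfind_mono ih

theorem bfind_spec {p : ℕ → Bool} : ∀ {w a : ℕ}, bfind p w = some a → p a = true := by
  intro w
  induction w with
  | zero =>
    intro a h
    unfold bfind at h
    cases hp : p 0 <;> simp [hp] at h
    exact h ▸ hp
  | succ n ih =>
    intro a h
    unfold bfind at h
    cases hb : bfind p n with
    | some b => rw [hb] at h; simp at h; exact ih (h ▸ hb)
    | none =>
      rw [hb] at h
      cases hp : p (n+1) <;> simp [hp] at h
      exact h ▸ hp

theorem bfind_isSome {p : ℕ → Bool} {a w : ℕ} (hp : p a = true) (h : a ≤ w) :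
    (bfind p w).isSome := by
  induction w with
  | zero =>
    have : a = 0 := Nat.le_zero.mp h
    subst this
    simp [bfind, hp]
  | succ n ih =>
    cases hb : bfind p n with
    | some b => simp [bfind, hb]
    | none =>
      rcases Nat.lt_or_ge a (n+1) with h' | h'
      · have := ih (Nat.lt_succ_iff.mp h')
        rw [hb] at this; simp at this
      · have : a = n + 1 := le_antisymm h h'
        subst this
        simp [bfind, hb, hp]

theorem bfind_none_all {p : ℕ → Bool} (hp : ∀ a, p a = false) (w : ℕ) :
    bfind p w = none := by
  induction w with
  | zero => simp [bfind, hp 0]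
  | succ n ih => simp [bfind, ih, hp (n+1)]

theorem bfind_computable {α : Type*} [Primcodable α] {p : α → ℕ → Bool}
    (hp : Computable₂ p) : Computable₂ fun x w => bfind (p x) w := by
  have hg : Computable fun q : α × ℕ => (cond (p q.1 0) (some 0) none : Option ℕ) :=
    Computable.cond (hp.comp Computable.fst (Computable.const 0))
      (Computable.const (some 0)) (Computable.const none)
  have hh : Computable₂ fun (q : α × ℕ) (r : ℕ × Option ℕ) =>
      ((r.2).elim (cond (p q.1 (r.1+1)) (some (r.1+1)) none) some : Option ℕ) := by
    have := Computable.option_casesOn (α := (α × ℕ) × ℕ × Option ℕ)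
      (o := fun z => z.2.2)
      (f := fun z => (cond (p z.1.1 (z.2.1+1)) (some (z.2.1+1)) none : Option ℕ))
      (g := fun _ a => (some a : Option ℕ))
      (Computable.snd.comp Computable.snd)
      (Computable.cond
        (hp.comp (Computable.fst.comp Computable.fst)
          (Computable.succ.comp (Computable.fst.comp Computable.snd)))
        (Computable.option_some.comp
          (Computable.succ.comp (Computable.fst.comp Computable.snd)))
        (Computable.const none))
      ((Computable.option_some.comp Computable.snd).to₂)
    refine this.of_eq fun z => ?_
    obtain ⟨q, n, o⟩ := z
    rcases o with _ | a <;> rfl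
  have := Computable.nat_rec (f := fun q : α × ℕ => q.2)
    (g := fun q : α × ℕ => (cond (p q.1 0) (some 0) none : Option ℕ))
    (h := fun (q : α × ℕ) (r : ℕ × Option ℕ) =>
      ((r.2).elim (cond (p q.1 (r.1+1)) (some (r.1+1)) none) some : Option ℕ))
    Computable.snd hg hh
  refine this.of_eq fun q => ?_
  obtain ⟨x, w⟩ := q
  induction w with
  | zero => rfl
  | succ n ih =>
    have ih' : (Nat.rec (cond (p x 0) (some 0) none)
        (fun y IH => IH.elim (cond (p x (y+1)) (some (y+1)) none) some) n : Option ℕ)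
        = bfind (p x) n := ih
    show ((Nat.rec (cond (p x 0) (some 0) none)
        (fun y IH => IH.elim (cond (p x (y+1)) (some (y+1)) none) some) n : Option ℕ).elim
        (cond (p x (n+1)) (some (n+1)) none) some) = bfind (p x) (n+1)
    rw [ih']
    cases hb : bfind (p x) n <;> simp [bfind, hb]

end MCAux

open MCAux

/-- Reduction with at most 3 mind changes from a Herbrand disjunction
(semantic content of Lemma 3.2, case r = 1). -/
theorem reduction_from_herbrand_disjunction
    (A B : ℕ → ℕ → ℕ → Bool)
    (hA : Computable (fun p : ℕ × ℕ × ℕ => A p.1 p.2.1 p.2.2))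
    (hB : Computable (fun p : ℕ × ℕ × ℕ => B p.1 p.2.1 p.2.2))
    (t₀ s₀ : ℕ → ℕ) (t₁ s₁ : ℕ → ℕ → ℕ → ℕ)
    (ht₀ : Computable t₀) (hs₀ : Computable s₀)
    (ht₁ : Computable (fun p : ℕ × ℕ × ℕ => t₁ p.1 p.2.1 p.2.2))
    (hs₁ : Computable (fun p : ℕ × ℕ × ℕ => s₁ p.1 p.2.1 p.2.2))
    (hherbrand : ∀ c a₀ b₀ a₁ b₁ : ℕ,
      A (t₀ c) a₀ c = false ∨ B (s₀ c) b₀ c = true ∨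
      A (t₁ a₀ b₀ c) a₁ c = false ∨ B (s₁ a₀ b₀ c) b₁ c = true) :
    ∃ f : ℕ → ℕ → Bool, Computable₂ f ∧
      ∀ c : ℕ,
        ({w : ℕ | f c w ≠ f c (w + 1)}.Finite ∧
          {w : ℕ | f c w ≠ f c (w + 1)}.ncard ≤ 3) ∧
        ∃ m : ℕ, ∃ ℓ : Bool, (∀ n ≥ m, f c n = ℓ) ∧
          (ℓ = false → ∃ z, ∀ u, B z u c = true) ∧
          (ℓ = true → ∃ x, ∀ y, A x y c = false) := by
  classical
  -- the reduction function
  set f : ℕ → ℕ → Bool := fun c w =>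
    (bfind (fun a => A (t₀ c) a c) w).elim true fun a₀ =>
      (bfind (fun b => !B (s₀ c) b c) w).elim false fun b₀ =>
        (bfind (fun a => A (t₁ a₀ b₀ c) a c) w).elim true fun _ => false
    with hf
  -- the "phase" (number of completed searches)
  set ph : ℕ → ℕ → ℕ := fun c w =>
    (bfind (fun a => A (t₀ c) a c) w).elim 0 fun a₀ =>
      (bfind (fun b => !B (s₀ c) b c) w).elim 1 fun b₀ =>
        (bfind (fun a => A (t₁ a₀ b₀ c) a c) w).elim 2 fun _ => 3
    with hph
  have f_eq_ph : ∀ c w, (f c w = true ↔ ph c w % 2 = 0) := by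
    intro c w
    simp only [hf, hph]
    rcases h1 : bfind (fun a => A (t₀ c) a c) w with _ | a₀
    · simp [h1]
    simp only [h1, Option.elim_some]
    rcases h2 : bfind (fun b => !B (s₀ c) b c) w with _ | b₀
    · simp [h2]
    simp only [h2, Option.elim_some]
    rcases h3 : bfind (fun a => A (t₁ a₀ b₀ c) a c) w with _ | a₁ <;>
      simp [h3, Option.elim_some, Option.elim_none]
  have ph_mono : ∀ c w, ph c w ≤ ph c (w+1) := by
    intro c w
    simp only [hph]
    rcases h1 : bfind (fun a => A (t₀ c) a c) w with _ | a₀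
    · simp [h1]
    have h1' := bfind_mono h1
    simp only [h1, h1', Option.elim_some]
    rcases h2 : bfind (fun b => !B (s₀ c) b c) w with _ | b₀
    · simp only [h2, Option.elim_none]
      rcases h2' : bfind (fun b => !B (s₀ c) b c) (w+1) with _ | b₀
      · simp [h2']
      · simp only [h2', Option.elim_some]
        rcases h3' : bfind (fun a => A (t₁ a₀ b₀ c) a c) (w+1) with _ | _ <;>
          simp [h3', Option.elim_some, Option.elim_none]
    have h2' := bfind_mono h2
    simp only [h2, h2', Option.elim_some]
    rcases h3 : bfind (fun a => A (t₁ a₀ b₀ c) a c) w with _ | a₁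
    · simp only [h3, Option.elim_none]
      rcases h3' : bfind (fun a => A (t₁ a₀ b₀ c) a c) (w+1) with _ | _ <;>
        simp [h3', Option.elim_some, Option.elim_none]
    have h3' := bfind_mono h3
    simp [h3, h3', Option.elim_some]
  have ph_le : ∀ c w, ph c w ≤ 3 := by
    intro c w
    simp only [hph]
    rcases h1 : bfind (fun a => A (t₀ c) a c) w with _ | a₀
    · simp [h1]
    simp only [h1, Option.elim_some]
    rcases h2 : bfind (fun b => !B (s₀ c) b c) w with _ | b₀
    · simp [h2]
    simp only [h2, Option.elim_some]
    rcases h3 : bfind (fun a => A (t₁ a₀ b₀ c) a c) w with _ | a₁ <;>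
      simp [h3, Option.elim_some, Option.elim_none]
  refine ⟨f, ?_, ?_⟩
  · -- computability
    have hP1 : Computable₂ fun (q : ℕ × ℕ) a => A (t₀ q.1) a q.1 :=
      hA.comp (Computable.pair (ht₀.comp (Computable.fst.comp Computable.fst))
        (Computable.pair Computable.snd (Computable.fst.comp Computable.fst)))
    have C1 : Computable fun q : ℕ × ℕ => bfind (fun a => A (t₀ q.1) a q.1) q.2 :=
      (bfind_computable hP1).comp Computable.id Computable.snd
    have hnot : Computable Bool.not := Primrec.not.to_comp
    have hP2 : Computable₂ fun (z : (ℕ × ℕ) × ℕ) b => !B (s₀ z.1.1) b z.1.1 :=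
      hnot.comp (hB.comp (Computable.pair
        (hs₀.comp (Computable.fst.comp (Computable.fst.comp Computable.fst)))
        (Computable.pair Computable.snd
          (Computable.fst.comp (Computable.fst.comp Computable.fst)))))
    have C2 : Computable fun z : (ℕ × ℕ) × ℕ =>
        bfind (fun b => !B (s₀ z.1.1) b z.1.1) z.1.2 :=
      (bfind_computable hP2).comp Computable.id (Computable.snd.comp Computable.fst)
    have hP3 : Computable₂ fun (y : ((ℕ × ℕ) × ℕ) × ℕ) a =>
        A (t₁ y.1.2 y.2 y.1.1.1) a y.1.1.1 := by
      have cc : Computable fun v : (((ℕ × ℕ) × ℕ) × ℕ) × ℕ => v.1.1.1.1 :=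
        Computable.fst.comp (Computable.fst.comp (Computable.fst.comp Computable.fst))
      exact hA.comp (Computable.pair
        (ht₁.comp (Computable.pair
          (Computable.snd.comp (Computable.fst.comp Computable.fst))
          (Computable.pair (Computable.snd.comp Computable.fst) cc)))
        (Computable.pair Computable.snd cc))
    have C3 : Computable fun y : ((ℕ × ℕ) × ℕ) × ℕ =>
        bfind (fun a => A (t₁ y.1.2 y.2 y.1.1.1) a y.1.1.1) y.1.1.2 :=
      (bfind_computable hP3).comp Computable.id
        (Computable.snd.comp (Computable.fst.comp Computable.fst))
    have Cg2 : Computable₂ fun (z : (ℕ × ℕ) × ℕ) (b₀ : ℕ) =>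
        (Option.casesOn (bfind (fun a => A (t₁ z.2 b₀ z.1.1) a z.1.1) z.1.2)
          true fun _ => false : Bool) :=
      Computable.option_casesOn C3 (Computable.const true)
        ((Computable.const false).to₂)
    have Cg1 : Computable₂ fun (q : ℕ × ℕ) (a₀ : ℕ) =>
        (Option.casesOn (bfind (fun b => !B (s₀ q.1) b q.1) q.2) false fun b₀ =>
          Option.casesOn (bfind (fun a => A (t₁ a₀ b₀ q.1) a q.1) q.2)
            true fun _ => false : Bool) :=
      Computable.option_casesOn C2 (Computable.const false) Cg2
    have Ctop : Computable fun q : ℕ × ℕ =>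
        (Option.casesOn (bfind (fun a => A (t₀ q.1) a q.1) q.2) true fun a₀ =>
          Option.casesOn (bfind (fun b => !B (s₀ q.1) b q.1) q.2) false fun b₀ =>
            Option.casesOn (bfind (fun a => A (t₁ a₀ b₀ q.1) a q.1) q.2)
              true fun _ => false : Bool) :=
      Computable.option_casesOn C1 (Computable.const true) Cg1
    refine Ctop.of_eq fun q => ?_
    simp only [hf]
    rcases h1 : bfind (fun a => A (t₀ q.1) a q.1) q.2 with _ | a₀
    · simp [h1]
    simp only [h1, Option.elim_some]
    rcases h2 : bfind (fun b => !B (s₀ q.1) b q.1) q.2 with _ | b₀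
    · simp [h2]
    simp only [h2, Option.elim_some]
    rcases h3 : bfind (fun a => A (t₁ a₀ b₀ q.1) a q.1) q.2 with _ | _ <;>
      simp [h3, Option.elim_some, Option.elim_none]
  intro c
  constructor
  · -- at most 3 mind changes
    have hmono : Monotone (ph c) := monotone_nat_of_le_succ (ph_mono c)
    set S := {w : ℕ | f c w ≠ f c (w + 1)} with hS
    set T := {w : ℕ | ph c w ≠ ph c (w + 1)} with hT
    have hsub : S ⊆ T := by
      intro w hw
      simp only [hS, hT, Set.mem_setOf_eq] at hw ⊢
      intro h
      have h1 := f_eq_ph c w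
      have h2 := f_eq_ph c (w+1)
      rw [h] at h1
      exact hw (Bool.eq_iff_iff.mpr (h1.trans h2.symm))
    have hmaps : ∀ w ∈ T, ph c (w+1) ∈ Set.Icc 1 3 := by
      intro w hw
      have h1 : ph c w < ph c (w+1) := lt_of_le_of_ne (ph_mono c w) hw
      exact ⟨by omega, ph_le c (w+1)⟩
    have hinj : Set.InjOn (fun w => ph c (w+1)) T := by
      intro x hx y hy hxy
      by_contra hne
      rcases Nat.lt_or_ge x y with h | h
      · have h1 : ph c (x+1) ≤ ph c y := hmono h
        have h2 : ph c y < ph c (y+1) := lt_of_le_of_ne (ph_mono c y) hy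
        simp only at hxy; omega
      · have h' : y < x := by omega
        have h1 : ph c (y+1) ≤ ph c x := hmono h'
        have h2 : ph c x < ph c (x+1) := lt_of_le_of_ne (ph_mono c x) hx
        simp only at hxy; omega
    have hTfin : T.Finite := by
      apply Set.Finite.of_finite_image ?_ hinj
      exact Set.Finite.subset (Set.finite_Icc 1 3)
        (by rintro _ ⟨w, hw, rfl⟩; exact hmaps w hw)
    have hTcard : T.ncard ≤ 3 := by
      have h := Set.ncard_le_ncard_of_injOn (fun w => ph c (w+1)) hmaps hinj
        (Set.finite_Icc 1 3)
      have h3 : (Set.Icc 1 3 : Set ℕ).ncard = 3 := by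
        rw [← Finset.coe_Icc, Set.ncard_coe_finset]
        simp
      omega
    exact ⟨hTfin.subset hsub, le_trans (Set.ncard_le_ncard hsub hTfin) hTcard⟩
  -- eventual value
  by_cases h₁ : ∀ a, A (t₀ c) a c = false
  · -- search 1 never succeeds
    refine ⟨0, true, ?_, by simp, fun _ => ⟨t₀ c, h₁⟩⟩
    intro n _
    simp only [hf]
    rw [bfind_none_all (p := fun a => A (t₀ c) a c) h₁]
    simp
  push_neg at h₁
  obtain ⟨a, ha⟩ := h₁
  have ha : A (t₀ c) a c = true := by revert ha; cases A (t₀ c) a c <;> simp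
  obtain ⟨a₀, ha₀⟩ := Option.isSome_iff_exists.mp
    (bfind_isSome (p := fun a => A (t₀ c) a c) ha le_rfl)
  have ha₀p : A (t₀ c) a₀ c = true :=
    bfind_spec (p := fun a => A (t₀ c) a c) ha₀
  have h1w : ∀ w, a ≤ w → bfind (fun a => A (t₀ c) a c) w = some a₀ :=
    fun w hw => bfind_mono_le hw ha₀
  by_cases h₂ : ∀ b, B (s₀ c) b c = true
  · -- search 2 never succeeds
    refine ⟨a, false, ?_, fun _ => ⟨s₀ c, h₂⟩, by simp⟩
    intro n hn
    simp only [hf]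
    rw [h1w n hn]
    simp only [Option.elim_some]
    rw [bfind_none_all (p := fun b => !B (s₀ c) b c) (by simp [h₂])]
    simp
  push_neg at h₂
  obtain ⟨b, hb⟩ := h₂
  have hb : B (s₀ c) b c = false := by revert hb; cases B (s₀ c) b c <;> simp
  obtain ⟨b₀, hb₀⟩ := Option.isSome_iff_exists.mp
    (bfind_isSome (p := fun b => !B (s₀ c) b c) (a := b) (by simp [hb]) le_rfl)
  have hb₀p : B (s₀ c) b₀ c = false := by
    have := bfind_spec (p := fun b => !B (s₀ c) b c) hb₀
    simpa using this
  have h2w : ∀ w, b ≤ w → bfind (fun b => !B (s₀ c) b c) w = some b₀ :=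
    fun w hw => bfind_mono_le hw hb₀
  by_cases h₃ : ∀ a', A (t₁ a₀ b₀ c) a' c = false
  · -- search 3 never succeeds
    refine ⟨max a b, true, ?_, by simp, fun _ => ⟨t₁ a₀ b₀ c, h₃⟩⟩
    intro n hn
    simp only [hf]
    rw [h1w n (le_trans (le_max_left a b) hn)]
    simp only [Option.elim_some]
    rw [h2w n (le_trans (le_max_right a b) hn)]
    simp only [Option.elim_some]
    rw [bfind_none_all (p := fun x => A (t₁ a₀ b₀ c) x c) h₃]
    simp
  push_neg at h₃
  obtain ⟨a', ha'⟩ := h₃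
  have ha' : A (t₁ a₀ b₀ c) a' c = true := by
    revert ha'; cases A (t₁ a₀ b₀ c) a' c <;> simp
  obtain ⟨a₁, ha₁⟩ := Option.isSome_iff_exists.mp
    (bfind_isSome (p := fun x => A (t₁ a₀ b₀ c) x c) ha' le_rfl)
  have ha₁p : A (t₁ a₀ b₀ c) a₁ c = true :=
    bfind_spec (p := fun x => A (t₁ a₀ b₀ c) x c) ha₁
  have h3w : ∀ w, a' ≤ w → bfind (fun x => A (t₁ a₀ b₀ c) x c) w = some a₁ :=
    fun w hw => bfind_mono_le hw ha₁
  refine ⟨max (max a b) a', false, ?_, ?_, by simp⟩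
  · intro n hn
    simp only [hf]
    rw [h1w n (le_trans (le_trans (le_max_left a b) (le_max_left _ a')) hn)]
    simp only [Option.elim_some]
    rw [h2w n (le_trans (le_trans (le_max_right a b) (le_max_left _ a')) hn)]
    simp only [Option.elim_some]
    rw [h3w n (le_trans (le_max_right _ a') hn)]
    simp
  · intro _
    refine ⟨s₁ a₀ b₀ c, fun u => ?_⟩
    rcases hherbrand c a₀ b₀ a₁ u with h | h | h | h
    · rw [ha₀p] at h; exact absurd h (by simp)
    · rw [hb₀p] at h; exact absurd h (by simp)
    · rw [ha₁p] at h; exact absurd h (by simp)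
    · exact h
end
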